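/- arXiv:math/0602560 — 5 statements merged into one kernel-verified Lean document; each statement's English description precedes it below -/
import Mathlib

section
/- Let C be a circle of radius R in the plane, and let A, B be points on C subtending an angle 2θ at the center (with 0 ≤ θ ≤ π/2). Then for any three points P₁, P₂, P₃ on the arc AB, the area of the triangle with vertices P₁, P₂, P₃ is at most R²·(θ - (1/2)·sin(2θ)). -/
open Real

lemma sorted_sin_bound (θ x y : ℝ) (hθ0 : 0 ≤ θ) (hθ : θ ≤ π/2)
    (hx : 0 ≤ x) (hy : 0 ≤ y) (hxy : x + y ≤ 2*θ) :
    |sin y + sin x - sin (x + y)| ≤ 2*θ - sin (2*θ) := by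
  have hπ : 0 < π := pi_pos
  have hxyπ : x + y ≤ π := by linarith
  have hsx : 0 ≤ sin x := sin_nonneg_of_nonneg_of_le_pi hx (by linarith)
  have hsy : 0 ≤ sin y := sin_nonneg_of_nonneg_of_le_pi hy (by linarith)
  have hnonneg : sin (x + y) ≤ sin x + sin y := by
    rw [sin_add]
    nlinarith [cos_le_one x, cos_le_one y, neg_one_le_cos x, neg_one_le_cos y]
  rw [abs_of_nonneg (by linarith)]
  -- upper bound
  have hs0 : 0 ≤ (x + y)/2 := by linarith
  have hsθ : (x + y)/2 ≤ θ := by linarith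
  have hss : 0 ≤ sin ((x+y)/2) := sin_nonneg_of_nonneg_of_le_pi hs0 (by linarith)
  have hsum : sin x + sin y = 2 * sin ((x+y)/2) * cos ((x-y)/2) := by
    have e : sin ((x+y)/2 + (x-y)/2) + sin ((x+y)/2 - (x-y)/2)
        = 2 * sin ((x+y)/2) * cos ((x-y)/2) := by rw [sin_add, sin_sub]; ring
    rw [show (x+y)/2 + (x-y)/2 = x by ring, show (x+y)/2 - (x-y)/2 = y by ring] at e
    linarith
  have hxy2 : sin (x + y) = 2 * sin ((x+y)/2) * cos ((x+y)/2) := by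
    rw [show x + y = 2 * ((x+y)/2) by ring, sin_two_mul]; ring_nf
  have h2θ : sin (2*θ) = 2 * sin θ * cos θ := by
    rw [sin_two_mul]
  have hmono1 : sin ((x+y)/2) ≤ sin θ :=
    sin_le_sin_of_le_of_le_pi_div_two (by linarith) hθ hsθ
  have hmono2 : cos θ ≤ cos ((x+y)/2) :=
    cos_le_cos_of_nonneg_of_le_pi hs0 (by linarith) hsθ
  have hcθ : cos θ ≤ 1 := cos_le_one θ
  have hsθ' : 0 ≤ sin θ := sin_nonneg_of_nonneg_of_le_pi hθ0 (by linarith)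
  have hcos1 : cos ((x-y)/2) ≤ 1 := cos_le_one _
  have hsinθleθ : sin θ ≤ θ := sin_le hθ0
  -- sin x + sin y - sin(x+y) ≤ 2 sin s (1 - cos s) ≤ 2 sinθ (1 - cosθ) ≤ 2θ - sin 2θ
  have step1 : sin x + sin y - sin (x+y) ≤ 2 * sin ((x+y)/2) * (1 - cos ((x+y)/2)) := by
    rw [hsum, hxy2]; nlinarith
  have step2 : 2 * sin ((x+y)/2) * (1 - cos ((x+y)/2)) ≤ 2 * sin θ * (1 - cos θ) := by
    nlinarith [cos_le_one ((x+y)/2)]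
  have step3 : 2 * sin θ * (1 - cos θ) ≤ 2*θ - sin (2*θ) := by
    rw [h2θ]; nlinarith
  linarith

theorem arc_triangle_area (R θ α : ℝ) (hR : 0 < R) (hθ0 : 0 ≤ θ) (hθ : θ ≤ π/2)
    (φ : Fin 3 → ℝ) (hφ : ∀ i, φ i ∈ Set.Icc α (α + 2*θ)) :
    |(R * cos (φ 1) - R * cos (φ 0)) * (R * sin (φ 2) - R * sin (φ 0)) -
     (R * cos (φ 2) - R * cos (φ 0)) * (R * sin (φ 1) - R * sin (φ 0))| / 2
      ≤ R^2 * (θ - (1/2) * sin (2*θ)) := by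
  set a := φ 0 with ha'
  set b := φ 1 with hb'
  set c := φ 2 with hc'
  have ha := hφ 0
  have hb := hφ 1
  have hc := hφ 2
  -- sorted bound
  have S : ∀ p q r : ℝ, p ∈ Set.Icc α (α + 2*θ) → r ∈ Set.Icc α (α + 2*θ) →
      p ≤ q → q ≤ r → |sin (r - q) + sin (q - p) + sin (p - r)| ≤ 2*θ - sin (2*θ) := by
    intro p q r hp hr hpq hqr
    have h1 : p - r = -((q - p) + (r - q)) := by ring
    have h2 : sin (r - q) + sin (q - p) + sin (p - r)
        = sin (r - q) + sin (q - p) - sin ((q - p) + (r - q)) := by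
      rw [h1, sin_neg]; ring
    rw [h2]
    exact sorted_sin_bound θ (q - p) (r - q) hθ0 hθ (by linarith) (by linarith)
      (by have := hp.1; have := hr.2; linarith)
  have key : |sin (c - b) + sin (b - a) + sin (a - c)| ≤ 2*θ - sin (2*θ) := by
    rcases le_total a b with h1 | h1
    · rcases le_total b c with h2 | h2
      · exact S a b c ha hc h1 h2
      · rcases le_total a c with h3 | h3
        · -- a ≤ c ≤ b : E a b c = -E a c b
          have e : sin (c - b) + sin (b - a) + sin (a - c)
              = -(sin (b - c) + sin (c - a) + sin (a - b)) := by
            rw [show c - b = -(b - c) by ring, show b - a = -(a - b) by ring,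
              show a - c = -(c - a) by ring, sin_neg, sin_neg, sin_neg]; ring
          rw [e, abs_neg]
          exact S a c b ha hb h3 h2
        · -- c ≤ a ≤ b : cyclic, E a b c = E c a b
          have e : sin (c - b) + sin (b - a) + sin (a - c)
              = sin (b - a) + sin (a - c) + sin (c - b) := by ring
          rw [e]
          exact S c a b hc hb h3 h1
    · rcases le_total a c with h2 | h2
      · -- b ≤ a ≤ c : E a b c = -E b a c
        have e : sin (c - b) + sin (b - a) + sin (a - c)
            = -(sin (c - a) + sin (a - b) + sin (b - c)) := by
          rw [show b - a = -(a - b) by ring, show a - c = -(c - a) by ring,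
            show c - b = -(b - c) by ring, sin_neg, sin_neg, sin_neg]; ring
        rw [e, abs_neg]
        exact S b a c hb hc h1 h2
      · rcases le_total b c with h3 | h3
        · -- b ≤ c ≤ a : cyclic, E a b c = E b c a
          have e : sin (c - b) + sin (b - a) + sin (a - c)
              = sin (a - c) + sin (c - b) + sin (b - a) := by ring
          rw [e]
          exact S b c a hb ha h3 h2
        · -- c ≤ b ≤ a : E a b c = -E c b a
          have e : sin (c - b) + sin (b - a) + sin (a - c)
              = -(sin (a - b) + sin (b - c) + sin (c - a)) := by
            rw [show c - b = -(b - c) by ring, show b - a = -(a - b) by ring,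
              show a - c = -(c - a) by ring, sin_neg, sin_neg, sin_neg]; ring
          rw [e, abs_neg]
          exact S c b a hc ha h3 h1
  have hdet : (R * cos b - R * cos a) * (R * sin c - R * sin a) -
      (R * cos c - R * cos a) * (R * sin b - R * sin a)
      = R^2 * (sin (c - b) + sin (b - a) + sin (a - c)) := by
    rw [sin_sub, sin_sub, sin_sub]; ring
  rw [hdet, abs_mul, abs_of_nonneg (sq_nonneg R)]
  have hR2 : 0 ≤ R^2 := sq_nonneg R
  nlinarith [key, abs_nonneg (sin (c - b) + sin (b - a) + sin (a - c))]
end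

section
/- Let C be a circle of radius R > 0 and let γ be an arc on C of arclength |γ| < ((3/4)·R)^(1/3). Then γ contains at most 2 points of the integer lattice ℤ². -/
open Real

lemma sin_sum_factor (p q : ℝ) :
    sin (2*q) + sin (2*p) - sin (2*p + 2*q) = 4 * sin p * sin q * sin (p + q) := by
  rw [Real.sin_add (2*p) (2*q), Real.sin_add p q]
  simp only [Real.sin_two_mul, Real.cos_two_mul]
  linear_combination -(4*sin q*cos q)*(Real.sin_sq_add_cos_sq p) - (4*sin p*cos p)*(Real.sin_sq_add_cos_sq q)

lemma det_trig (t1 t2 t3 : ℝ) :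
    (cos t2 - cos t1) * (sin t3 - sin t1) - (cos t3 - cos t1) * (sin t2 - sin t1)
      = 4 * sin ((t2 - t1)/2) * sin ((t3 - t2)/2) * sin ((t2 - t1)/2 + (t3 - t2)/2) := by
  have step1 : (cos t2 - cos t1) * (sin t3 - sin t1) - (cos t3 - cos t1) * (sin t2 - sin t1)
      = sin (t3 - t2) + sin (t2 - t1) - sin (t3 - t1) := by
    simp only [Real.sin_sub]; ring
  have key := sin_sum_factor ((t2 - t1)/2) ((t3 - t2)/2)
  rw [show 2 * ((t3 - t2)/2) = t3 - t2 from by ring,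
      show 2 * ((t2 - t1)/2) = t2 - t1 from by ring] at key
  rw [show t2 - t1 + (t3 - t2) = t3 - t1 from by ring] at key
  linarith [step1, key]

lemma pts_eq_of_sin_eq_zero (R : ℝ) (c : ℝ × ℝ) (s t : ℝ)
    (h : sin ((t - s)/2) = 0) :
    ((c.1 + R * cos s, c.2 + R * sin s) : ℝ × ℝ) = (c.1 + R * cos t, c.2 + R * sin t) := by
  rcases Real.sin_eq_zero_iff.mp h with ⟨n, hn⟩
  have ht : t = s + n * (2 * π) := by
    field_simp at hn; linarith
  rw [ht, Real.cos_add_int_mul_two_pi, Real.sin_add_int_mul_two_pi]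

lemma key_lemma (R a b : ℝ) (c : ℝ × ℝ) (hR : 0 < R)
    (hlen : R * (b - a) < ((3/4) * R) ^ ((1:ℝ)/3))
    (t1 t2 t3 : ℝ) (h1a : a ≤ t1) (h12 : t1 ≤ t2) (h23 : t2 ≤ t3) (h3b : t3 ≤ b)
    (m1 n1 m2 n2 m3 n3 : ℤ)
    (e1 : ((m1:ℝ), (n1:ℝ)) = ((c.1 + R * cos t1, c.2 + R * sin t1) : ℝ × ℝ))
    (e2 : ((m2:ℝ), (n2:ℝ)) = ((c.1 + R * cos t2, c.2 + R * sin t2) : ℝ × ℝ))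
    (e3 : ((m3:ℝ), (n3:ℝ)) = ((c.1 + R * cos t3, c.2 + R * sin t3) : ℝ × ℝ))
    (d12 : ((m1:ℝ), (n1:ℝ)) ≠ ((m2:ℝ), (n2:ℝ)))
    (d13 : ((m1:ℝ), (n1:ℝ)) ≠ ((m3:ℝ), (n3:ℝ)))
    (d23 : ((m2:ℝ), (n2:ℝ)) ≠ ((m3:ℝ), (n3:ℝ))) : False := by
  have e1x : (m1:ℝ) = c.1 + R * cos t1 := congrArg Prod.fst e1
  have e1y : (n1:ℝ) = c.2 + R * sin t1 := congrArg Prod.snd e1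
  have e2x : (m2:ℝ) = c.1 + R * cos t2 := congrArg Prod.fst e2
  have e2y : (n2:ℝ) = c.2 + R * sin t2 := congrArg Prod.snd e2
  have e3x : (m3:ℝ) = c.1 + R * cos t3 := congrArg Prod.fst e3
  have e3y : (n3:ℝ) = c.2 + R * sin t3 := congrArg Prod.snd e3
  set D : ℤ := (m2 - m1) * (n3 - n1) - (m3 - m1) * (n2 - n1) with hD
  set u := (t2 - t1)/2 with hu
  set v := (t3 - t2)/2 with hv
  have dt := det_trig t1 t2 t3
  rw [← hu, ← hv] at dt
  have hDr : (D : ℝ) = R^2 * (4 * sin u * sin v * sin (u + v)) := by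
    push_cast [hD]
    rw [e1x, e1y, e2x, e2y, e3x, e3y]
    linear_combination (R^2) * dt
  have hsu : sin u ≠ 0 := fun h => by
    rw [hu] at h
    exact d12 (e1.trans ((pts_eq_of_sin_eq_zero R c t1 t2 h).trans e2.symm))
  have hsv : sin v ≠ 0 := fun h => by
    rw [hv] at h
    exact d23 (e2.trans ((pts_eq_of_sin_eq_zero R c t2 t3 h).trans e3.symm))
  have hsuv : sin (u + v) ≠ 0 := fun h => by
    rw [hu, hv, show (t2 - t1)/2 + (t3 - t2)/2 = (t3 - t1)/2 from by ring] at h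
    exact d13 (e1.trans ((pts_eq_of_sin_eq_zero R c t1 t3 h).trans e3.symm))
  have hDrne : ((D : ℤ) : ℝ) ≠ 0 := by
    rw [hDr]
    exact mul_ne_zero (by positivity)
      (mul_ne_zero (mul_ne_zero (mul_ne_zero (by norm_num) hsu) hsv) hsuv)
  have hDne : D ≠ 0 := fun h => hDrne (by exact_mod_cast congrArg (Int.cast : ℤ → ℝ) h)
  have h1le : (1 : ℝ) ≤ |(D : ℝ)| := by
    rw [← Int.cast_abs]
    exact_mod_cast Int.one_le_abs hDne
  have hu0 : 0 ≤ u := by rw [hu]; linarith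
  have hv0 : 0 ≤ v := by rw [hv]; linarith
  have huv : 2*u + 2*v ≤ b - a := by rw [hu, hv]; linarith
  have b1 : |sin u| ≤ u := by simpa [abs_of_nonneg hu0] using Real.abs_sin_le_abs (x := u)
  have b2 : |sin v| ≤ v := by simpa [abs_of_nonneg hv0] using Real.abs_sin_le_abs (x := v)
  have b3 : |sin (u+v)| ≤ u + v := by
    simpa [abs_of_nonneg (by linarith : (0:ℝ) ≤ u + v)] using Real.abs_sin_le_abs (x := u+v)
  have habs : |(D:ℝ)| = R^2 * 4 * (|sin u| * |sin v| * |sin (u+v)|) := by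
    rw [hDr]
    simp only [abs_mul]
    rw [abs_of_nonneg (sq_nonneg R), abs_of_nonneg (by norm_num : (0:ℝ) ≤ 4)]
    ring
  have hprod : |sin u| * |sin v| * |sin (u+v)| ≤ u * v * (u+v) :=
    mul_le_mul (mul_le_mul b1 b2 (abs_nonneg _) hu0) b3 (abs_nonneg _)
      (mul_nonneg hu0 hv0)
  have hub : |(D : ℝ)| ≤ R^2 * 4 * (u * v * (u + v)) := by
    rw [habs]
    exact mul_le_mul_of_nonneg_left hprod (by positivity)
  have hcube : (R * (b - a))^3 < (3/4) * R := by
    have hba : 0 ≤ b - a := by linarith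
    have hpos : (0:ℝ) < (3/4) * R := by linarith
    have h1 : (R * (b-a))^3 < (((3/4) * R) ^ ((1:ℝ)/3))^3 :=
      pow_lt_pow_left₀ hlen (by positivity) (by norm_num)
    have h2 : (((3/4) * R) ^ ((1:ℝ)/3))^3 = (3/4) * R := by
      rw [← Real.rpow_natCast (((3/4) * R) ^ ((1:ℝ)/3)) 3, ← Real.rpow_mul hpos.le]
      norm_num
    linarith
  have hfin : |(D : ℝ)| < 1 := by
    have hba : 0 ≤ b - a := by linarith
    calc |(D : ℝ)| ≤ R^2 * 4 * (u * v * (u + v)) := hub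
      _ ≤ R^2 * 4 * ((b-a)/2 * ((b-a)/2) * ((b-a)/2)) := by gcongr <;> linarith
      _ = (R * (b-a))^3 / (2 * R) := by field_simp; ring
      _ < ((3/4) * R) / (2 * R) := by gcongr
      _ = 3/8 := by field_simp; ring
      _ < 1 := by norm_num
  linarith

theorem arc_lattice_points (R a b : ℝ) (c : ℝ × ℝ) (hR : 0 < R) (hab : a ≤ b)
    (hlen : R * (b - a) < ((3/4) * R) ^ ((1:ℝ)/3)) :
    ({p : ℝ × ℝ | (∃ t ∈ Set.Icc a b, p = (c.1 + R * cos t, c.2 + R * sin t)) ∧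
        ∃ m n : ℤ, p = ((m : ℝ), (n : ℝ))}).ncard ≤ 2 := by
  by_contra hcon
  push_neg at hcon
  have hfin := Set.finite_of_ncard_ne_zero
    (by omega : ({p : ℝ × ℝ | (∃ t ∈ Set.Icc a b, p = (c.1 + R * cos t, c.2 + R * sin t)) ∧
        ∃ m n : ℤ, p = ((m : ℝ), (n : ℝ))}).ncard ≠ 0)
  obtain ⟨p, hp, q, hq, r, hr, hpq, hpr, hqr⟩ := (Set.two_lt_ncard hfin).mp hcon
  obtain ⟨⟨tp, htp, hpe⟩, mp1, np1, hpmn⟩ := hp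
  obtain ⟨⟨tq, htq, hqe⟩, mq1, nq1, hqmn⟩ := hq
  obtain ⟨⟨tr, htr, hre⟩, mr1, nr1, hrmn⟩ := hr
  rw [hpmn, hqmn] at hpq
  rw [hpmn, hrmn] at hpr
  rw [hqmn, hrmn] at hqr
  rw [hpmn] at hpe
  rw [hqmn] at hqe
  rw [hrmn] at hre
  rcases le_total tp tq with h1 | h1
  · rcases le_total tq tr with h2 | h2
    · exact key_lemma R a b c hR hlen tp tq tr htp.1 h1 h2 htr.2
        mp1 np1 mq1 nq1 mr1 nr1 hpe hqe hre hpq hpr hqr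
    · rcases le_total tp tr with h3 | h3
      · exact key_lemma R a b c hR hlen tp tr tq htp.1 h3 h2 htq.2
          mp1 np1 mr1 nr1 mq1 nq1 hpe hre hqe hpr hpq hqr.symm
      · exact key_lemma R a b c hR hlen tr tp tq htr.1 h3 h1 htq.2
          mr1 nr1 mp1 np1 mq1 nq1 hre hpe hqe hpr.symm hqr.symm hpq
  · rcases le_total tp tr with h2 | h2
    · exact key_lemma R a b c hR hlen tq tp tr htq.1 h1 h2 htr.2
        mq1 nq1 mp1 np1 mr1 nr1 hqe hpe hre hpq.symm hqr hpr
    · rcases le_total tq tr with h3 | h3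
      · exact key_lemma R a b c hR hlen tq tr tp htq.1 h3 h2 htp.2
          mq1 nq1 mr1 nr1 mp1 np1 hqe hre hpe hqr hpq.symm hpr.symm
      · exact key_lemma R a b c hR hlen tr tq tp htr.1 h3 h1 htp.2
          mr1 nr1 mq1 nq1 mp1 np1 hre hqe hpe hqr.symm hpr.symm hpq.symm
end

section
/- Let λ ≥ 1 be a real number, N₁ > 0, and suppose z₀, k ∈ ℝ satisfy |z₀ - k/2| ≥ N₁. Then the number of points z̄ ∈ (1/λ)·ℤ satisfying |z̄| ≤ N₁/2 and |z̄·(z̄ + 2(z₀ - k/2))| ≤ 1 is at most C·(1 + λ/N₁) for some absolute constant C. -/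
theorem lattice_count_1d :
    ∃ C : ℝ, 0 < C ∧ ∀ (lam N₁ z₀ k : ℝ), 1 ≤ lam → 0 < N₁ → N₁ ≤ |z₀ - k/2| →
      (({z : ℝ | (∃ n : ℤ, z = n / lam) ∧ |z| ≤ N₁ / 2 ∧
          |z * (z + 2 * (z₀ - k/2))| ≤ 1}).ncard : ℝ) ≤ C * (1 + lam / N₁) := by
  refine ⟨2, by norm_num, ?_⟩
  intro lam N₁ z₀ k hlam hN hw
  have hlam0 : (0:ℝ) < lam := lt_of_lt_of_le one_pos hlam
  set w : ℝ := z₀ - k/2 with hwdef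
  set M : ℤ := ⌊2*lam/(3*N₁)⌋ with hM
  have hMnn : 0 ≤ M := Int.floor_nonneg.2 (by positivity)
  have hsub : {z : ℝ | (∃ n : ℤ, z = n / lam) ∧ |z| ≤ N₁ / 2 ∧
      |z * (z + 2 * w)| ≤ 1} ⊆ (fun n : ℤ => (n:ℝ)/lam) '' (Set.Icc (-M) M) := by
    rintro z ⟨⟨n, rfl⟩, h1, h2⟩
    have hz : |(n:ℝ)/lam| ≤ 2/(3*N₁) := by
      have hb : (3*N₁/2 : ℝ) ≤ |(n:ℝ)/lam + 2*w| := by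
        have h2w : 2*N₁ ≤ |2*w| := by rw [abs_mul]; simp; nlinarith [hw]
        have habs2 : |2*w| ≤ |(n:ℝ)/lam + 2*w| + |(n:ℝ)/lam| := by
          calc |2*w| = |((n:ℝ)/lam + 2*w) + (-((n:ℝ)/lam))| := by ring_nf
            _ ≤ |(n:ℝ)/lam + 2*w| + |-((n:ℝ)/lam)| := abs_add_le _ _
            _ = |(n:ℝ)/lam + 2*w| + |(n:ℝ)/lam| := by rw [abs_neg]
        linarith
      rw [abs_mul] at h2
      have key : |(n:ℝ)/lam| * (3*N₁/2) ≤ 1 :=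
        le_trans (mul_le_mul_of_nonneg_left hb (abs_nonneg _)) h2
      rw [le_div_iff₀ (by positivity)]
      linarith
    have habs : |(n:ℝ)| ≤ 2*lam/(3*N₁) := by
      rw [abs_div, abs_of_pos hlam0, div_le_div_iff₀ hlam0 (by positivity)] at hz
      rw [le_div_iff₀ (by positivity)]
      linarith
    rw [abs_le] at habs
    refine ⟨n, ?_, rfl⟩
    constructor
    · rw [neg_le]
      exact_mod_cast Int.le_floor.2 (by push_cast; linarith)
    · exact Int.le_floor.2 (by push_cast; linarith)
  have hfin : (Set.Icc (-M) M).Finite := Set.finite_Icc _ _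
  have hle := Set.ncard_le_ncard hsub (hfin.image _)
  have himg := Set.ncard_image_le (f := fun n : ℤ => (n:ℝ)/lam) hfin
  have hcard : (Set.Icc (-M) M).ncard = (2*M+1).toNat := by
    rw [← Finset.coe_Icc, Set.ncard_coe_finset, Int.card_Icc]
    congr 1; ring
  have hfloor : (M:ℝ) ≤ 2*lam/(3*N₁) := Int.floor_le _
  have hmain : (({z : ℝ | (∃ n : ℤ, z = n / lam) ∧ |z| ≤ N₁ / 2 ∧
      |z * (z + 2 * w)| ≤ 1}).ncard : ℝ) ≤ ((2*M+1).toNat : ℝ) := by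
    exact_mod_cast (hle.trans himg).trans_eq hcard
  have htn : ((2*M+1).toNat : ℝ) = 2*(M:ℝ)+1 := by
    have h' : ((2*M+1).toNat : ℤ) = 2*M+1 := Int.toNat_of_nonneg (by linarith)
    exact_mod_cast h'
  rw [htn] at hmain
  have hMle : (M:ℝ) ≤ lam/N₁ := by
    refine hfloor.trans ?_
    rw [div_le_div_iff₀ (by positivity) hN]
    nlinarith
  linarith
end

section
/- Let w ∈ ℝ² with |w| ≥ N₁ > 0, let N₂ > 0, c > 0, and λ ≥ 1. Suppose additionally N₂ ≤ N₁/10 and c ≤ N₁²/10. Then the set B = {(x,y) ∈ ℝ² : |x² + y² + 2(ax + by)| ≤ c, x² + y² ≤ N₂²}, where w = (a,b), is contained in the annular sector between the circles of radii r₂ = √(a²+b²-c) and r₁ = √(a²+b²+c) centered at (-a,-b), intersected with the angular sector of aperture 2θ at (-a,-b), where sin θ = N₂/√(a²+b²); consequently the area of B is at most C·c·N₂/N₁ for an absolute constant C. -/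
/-!
Since `‖p‖² + 2⟪w, p⟫ = ‖p + w‖² - ‖w‖²`, the set `B` is the part of the closed `N₂`-ball lying in
the annulus around `-w` of squared radii `‖w‖² ± c`, and as `‖p‖ ≤ N₂ < ‖w‖` the vector `p + w`
makes an angle at most `arcsin (N₂ / ‖w‖)` with `w`.

For the area, a reflection moves `w` onto the second coordinate axis. If `(x, y₁)` and `(x, y₂)`
both lie in `B`, then `|(y₁ - y₂) (y₁ + y₂ + 2‖w‖)| ≤ 2c` and `y₁ + y₂ + 2‖w‖ ≥ ‖w‖`, so every
vertical slice of `B` has length at most `2c / ‖w‖`; integrating over `x ∈ [-N₂, N₂]` gives area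
at most `4 c N₂ / ‖w‖`.
-/

open Real InnerProductGeometry MeasureTheory RealInnerProductSpace
open scoped ENNReal

section InnerProductSpace

variable {E F : Type*} [NormedAddCommGroup E] [InnerProductSpace ℝ E]
  [NormedAddCommGroup F] [InnerProductSpace ℝ F]

def annulusInBall (w : E) (c N : ℝ) : Set E :=
  {p | |‖p‖ ^ 2 + 2 * ⟪w, p⟫| ≤ c ∧ ‖p‖ ^ 2 ≤ N ^ 2}

theorem isClosed_annulusInBall (w : E) (c N : ℝ) : IsClosed (annulusInBall w c N) := by
  simp only [annulusInBall, Set.ofPred_and]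
  exact (isClosed_le (by fun_prop) continuous_const).inter
    (isClosed_le (by fun_prop) continuous_const)

theorem preimage_annulusInBall (g : E ≃ₗᵢ[ℝ] F) (w : E) (c N : ℝ) :
    g ⁻¹' annulusInBall (g w) c N = annulusInBall w c N := by
  ext p
  simp only [annulusInBall, Set.mem_preimage, Set.mem_ofPred_eq, LinearIsometryEquiv.norm_map,
    LinearIsometryEquiv.inner_map_map]

theorem norm_add_mem_Icc_of_mem_annulusInBall {w p : E} {c N : ℝ}
    (hp : p ∈ annulusInBall w c N) :
    ‖p + w‖ ∈ Set.Icc √(‖w‖ ^ 2 - c) √(‖w‖ ^ 2 + c) := by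
  have hsq : ‖p + w‖ ^ 2 = ‖p‖ ^ 2 + 2 * ⟪w, p⟫ + ‖w‖ ^ 2 := by
    rw [norm_add_sq_real, real_inner_comm]
  obtain ⟨hlo, hhi⟩ := abs_le.1 hp.1
  rw [← sqrt_sq (norm_nonneg (p + w))]
  exact ⟨sqrt_le_sqrt (by linarith), sqrt_le_sqrt (by linarith)⟩

theorem angle_add_le_arcsin {x y : E} (h : ‖y‖ < ‖x‖) :
    angle (y + x) x ≤ arcsin (‖y‖ / ‖x‖) := by
  set R := ‖x‖
  set N := ‖y‖
  have hR : 0 < R := (norm_nonneg y).trans_lt h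
  have hyx : |⟪y, x⟫| ≤ N * R := abs_real_inner_le_norm y x
  have ht : ⟪y + x, x⟫ = ⟪y, x⟫ + R ^ 2 := by
    rw [inner_add_left, real_inner_self_eq_norm_sq]
  have hn : ‖y + x‖ ^ 2 = N ^ 2 + 2 * ⟪y, x⟫ + R ^ 2 := norm_add_sq_real y x
  have ht_pos : 0 < ⟪y + x, x⟫ := by nlinarith [abs_le.1 hyx]
  have hn_pos : 0 < ‖y + x‖ := norm_pos_iff.2 fun h0 =>
    h.ne (by simp only [N, R, eq_neg_of_add_eq_zero_left h0, norm_neg])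
  -- with `t = ⟪y + x, x⟫` and `‖y + x‖² = N² + 2t - R²`, this is `(t - (R² - N²))² ≥ 0`
  have hkey : √(R ^ 2 - N ^ 2) * ‖y + x‖ ≤ ⟪y + x, x⟫ := by
    have hRN : 0 ≤ R ^ 2 - N ^ 2 := by nlinarith [norm_nonneg y]
    refine (pow_le_pow_iff_left₀ (by positivity) ht_pos.le two_ne_zero).1 ?_
    rw [mul_pow, sq_sqrt hRN, hn]
    nlinarith [sq_nonneg (⟪y + x, x⟫ - (R ^ 2 - N ^ 2))]
  have hcos : cos (arcsin (N / R)) ≤ cos (angle (y + x) x) := by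
    rw [cos_arcsin, cos_angle, div_pow, one_sub_div (by positivity), sqrt_div' _ (sq_nonneg R),
      sqrt_sq hR.le, div_le_div_iff₀ hR (by positivity)]
    nlinarith
  by_contra! hlt
  exact (cos_lt_cos_of_nonneg_of_le_pi (arcsin_nonneg.2 (by positivity)) (angle_le_pi _ _)
    hlt).not_ge hcos

theorem angle_add_le_arcsin_of_mem_annulusInBall {w p : E} {c N : ℝ} (hN₀ : 0 ≤ N)
    (hN : N < ‖w‖) (hp : p ∈ annulusInBall w c N) : angle (p + w) w ≤ arcsin (N / ‖w‖) := by
  have hpN : ‖p‖ ≤ N := (pow_le_pow_iff_left₀ (norm_nonneg p) hN₀ two_ne_zero).1 hp.2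
  calc angle (p + w) w ≤ arcsin (‖p‖ / ‖w‖) := angle_add_le_arcsin (hpN.trans_lt hN)
    _ ≤ arcsin (N / ‖w‖) := monotone_arcsin (div_le_div_of_nonneg_right hpN (norm_nonneg w))

end InnerProductSpace

theorem MeasureTheory.Measure.prod_apply_le_mul_of_slice_le {α β : Type*} [MeasurableSpace α]
    [MeasurableSpace β] {μ : Measure α} {ν : Measure β} [SFinite ν] {s : Set (α × β)}
    (hs : MeasurableSet s) {t : Set α} {a : ℝ≥0∞} (hst : s ⊆ t ×ˢ Set.univ)
    (ha : ∀ x ∈ t, ν (Prod.mk x ⁻¹' s) ≤ a) :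
    μ.prod ν s ≤ a * μ t := by
  rw [Measure.prod_apply hs]
  calc ∫⁻ x, ν (Prod.mk x ⁻¹' s) ∂μ ≤ ∫⁻ x, t.indicator (fun _ => a) x ∂μ := by
        refine lintegral_mono fun x => ?_
        by_cases hx : x ∈ t
        · simpa [hx] using ha x hx
        · have : Prod.mk x ⁻¹' s = ∅ := Set.eq_empty_of_forall_notMem fun y hy => hx (hst hy).1
          simp [this]
    _ ≤ a * μ t := lintegral_indicator_const_le t a

theorem ediam_annulusSlice_le {R c N x : ℝ} (hR : 0 < R) (hN₀ : 0 ≤ N) (hN : N ≤ R / 2) :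
    Metric.ediam {y : ℝ | |x ^ 2 + y ^ 2 + 2 * (R * y)| ≤ c ∧ x ^ 2 + y ^ 2 ≤ N ^ 2} ≤
      ENNReal.ofReal (2 * c / R) := by
  refine Metric.ediam_le fun u ⟨hu, hNu⟩ v ⟨hv, hNv⟩ => ?_
  rw [edist_dist, Real.dist_eq]
  refine ENNReal.ofReal_le_ofReal ((le_div_iff₀ hR).2 ?_)
  have hu₀ : -N ≤ u := (abs_le_of_sq_le_sq' (by linarith [sq_nonneg x]) hN₀).1
  have hv₀ : -N ≤ v := (abs_le_of_sq_le_sq' (by linarith [sq_nonneg x]) hN₀).1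
  calc |u - v| * R ≤ |u - v| * (u + v + 2 * R) := by gcongr; linarith
    _ = |(x ^ 2 + u ^ 2 + 2 * (R * u)) - (x ^ 2 + v ^ 2 + 2 * (R * v))| := by
      rw [← abs_of_pos (by linarith : 0 < u + v + 2 * R), ← abs_mul]
      ring_nf
    _ ≤ |x ^ 2 + u ^ 2 + 2 * (R * u)| + |x ^ 2 + v ^ 2 + 2 * (R * v)| := abs_sub _ _
    _ ≤ 2 * c := by linarith

namespace EuclideanSpace

theorem sq_add_sq_eq_norm_sq (p : EuclideanSpace ℝ (Fin 2)) : p 0 ^ 2 + p 1 ^ 2 = ‖p‖ ^ 2 := by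
  simp [EuclideanSpace.norm_sq_eq, Fin.sum_univ_two]

theorem inner_eq_fin_two (w p : EuclideanSpace ℝ (Fin 2)) : ⟪w, p⟫ = w 0 * p 0 + w 1 * p 1 := by
  simp [PiLp.inner_apply, Fin.sum_univ_two, mul_comm]

theorem volume_annulusInBall_single_le {R c N : ℝ} (hR : 0 < R) (hN₀ : 0 ≤ N) (hN : N ≤ R / 2) :
    volume (annulusInBall (single 1 R : EuclideanSpace ℝ (Fin 2)) c N) ≤
      ENNReal.ofReal (4 * c * N / R) := by
  set A := annulusInBall (single 1 R : EuclideanSpace ℝ (Fin 2)) c N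
  set G : ℝ × ℝ → EuclideanSpace ℝ (Fin 2) := WithLp.toLp 2 ∘ MeasurableEquiv.finTwoArrow.symm
  have hG : MeasurePreserving G :=
    (PiLp.volume_preserving_toLp (Fin 2)).comp (volume_preserving_finTwoArrow ℝ).symm
  have hA : MeasurableSet A := (isClosed_annulusInBall _ c N).measurableSet
  have hslice : ∀ x, Prod.mk x ⁻¹' (G ⁻¹' A) =
      {y : ℝ | |x ^ 2 + y ^ 2 + 2 * (R * y)| ≤ c ∧ x ^ 2 + y ^ 2 ≤ N ^ 2} := by
    intro x
    ext y
    simp [A, G, annulusInBall, ← sq_add_sq_eq_norm_sq, EuclideanSpace.inner_single_left]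
  rw [← hG.measure_preimage hA.nullMeasurableSet]
  calc volume (G ⁻¹' A) ≤ ENNReal.ofReal (2 * c / R) * volume (Set.Icc (-N) N) := by
        refine Measure.prod_apply_le_mul_of_slice_le (hA.preimage hG.measurable) ?_ fun x _ => ?_
        · rintro ⟨x, y⟩ hxy
          replace hxy : y ∈ Prod.mk x ⁻¹' (G ⁻¹' A) := hxy
          rw [hslice] at hxy
          exact ⟨abs_le_of_sq_le_sq' (by linarith [hxy.2, sq_nonneg y]) hN₀, trivial⟩
        · rw [hslice]
          exact (Real.volume_le_diam _).trans (ediam_annulusSlice_le hR hN₀ hN)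
    _ = ENNReal.ofReal (4 * c * N / R) := by
        rw [Real.volume_Icc, ← ENNReal.ofReal_mul' (by linarith)]
        ring_nf

theorem volume_annulusInBall_le {w : EuclideanSpace ℝ (Fin 2)} {c N : ℝ} (hw : w ≠ 0)
    (hN₀ : 0 ≤ N) (hN : N ≤ ‖w‖ / 2) :
    volume (annulusInBall w c N) ≤ ENNReal.ofReal (4 * c * N / ‖w‖) := by
  set g := Submodule.reflection (ℝ ∙ (w - single 1 ‖w‖))ᗮ
  have hgw : g w = single 1 ‖w‖ := Submodule.reflection_sub (by simp)
  rw [← preimage_annulusInBall g, hgw, g.measurePreserving.measure_preimage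
    (isClosed_annulusInBall _ c N).measurableSet.nullMeasurableSet]
  exact volume_annulusInBall_single_le (norm_pos_iff.2 hw) hN₀ hN

end EuclideanSpace

theorem annulus_sector_containment_and_area :
    ∃ C : ℝ, 0 < C ∧
      ∀ (N₁ N₂ c lam : ℝ) (w : EuclideanSpace ℝ (Fin 2)),
        0 < N₁ → 0 < N₂ → 0 < c → 1 ≤ lam → N₁ ≤ ‖w‖ →
        N₂ ≤ N₁ / 10 → c ≤ N₁^2 / 10 →
        ({p : EuclideanSpace ℝ (Fin 2) |
            |(p 0)^2 + (p 1)^2 + 2 * (w 0 * p 0 + w 1 * p 1)| ≤ c ∧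
            (p 0)^2 + (p 1)^2 ≤ N₂^2} ⊆
          {p : EuclideanSpace ℝ (Fin 2) |
            Real.sqrt ((w 0)^2 + (w 1)^2 - c) ≤ ‖p - (-w)‖ ∧
            ‖p - (-w)‖ ≤ Real.sqrt ((w 0)^2 + (w 1)^2 + c) ∧
            angle (p - (-w)) w ≤ Real.arcsin (N₂ / Real.sqrt ((w 0)^2 + (w 1)^2))}) ∧
        MeasureTheory.volume
            {p : EuclideanSpace ℝ (Fin 2) |
              |(p 0)^2 + (p 1)^2 + 2 * (w 0 * p 0 + w 1 * p 1)| ≤ c ∧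
              (p 0)^2 + (p 1)^2 ≤ N₂^2}
          ≤ ENNReal.ofReal (C * c * N₂ / N₁) := by
  refine ⟨4, four_pos, fun N₁ N₂ c _ w hN₁ hN₂ hc _ hw hN₂N₁ _ => ?_⟩
  have hB : {p : EuclideanSpace ℝ (Fin 2) |
      |(p 0)^2 + (p 1)^2 + 2 * (w 0 * p 0 + w 1 * p 1)| ≤ c ∧ (p 0)^2 + (p 1)^2 ≤ N₂^2} =
      annulusInBall w c N₂ := by
    simp only [EuclideanSpace.sq_add_sq_eq_norm_sq, ← EuclideanSpace.inner_eq_fin_two,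
      annulusInBall]
  have hN₂w : N₂ < ‖w‖ := by linarith
  rw [hB, EuclideanSpace.sq_add_sq_eq_norm_sq, sqrt_sq (norm_nonneg w)]
  refine ⟨fun p hp => ?_, ?_⟩
  · obtain ⟨hlo, hhi⟩ := norm_add_mem_Icc_of_mem_annulusInBall hp
    simp only [Set.mem_ofPred_eq, sub_neg_eq_add]
    exact ⟨hlo, hhi, angle_add_le_arcsin_of_mem_annulusInBall hN₂.le hN₂w hp⟩
  · calc volume (annulusInBall w c N₂) ≤ ENNReal.ofReal (4 * c * N₂ / ‖w‖) :=
          EuclideanSpace.volume_annulusInBall_le (norm_pos_iff.1 (hN₁.trans_le hw)) hN₂.le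
            (by linarith)
      _ ≤ ENNReal.ofReal (4 * c * N₂ / N₁) :=
          ENNReal.ofReal_le_ofReal (div_le_div_of_nonneg_left (by positivity) hN₁ hw)
end

section
/- Let u₀ ∈ H^s(ℝ/ℤ) with 0 < s < 1, N ≥ 1, λ ≥ 1, and define u₀^λ(x) = λ^(-1/2)·u₀(x/λ) on ℝ/λℤ. Let I be the Fourier multiplier operator with symbol m(k) where m(k) = 1 for |k| ≤ N, m(k) = (|k|/N)^(s-1) for |k| > N. Then ‖∂ₓ(I u₀^λ)‖_{L²} ≤ C·(N^(1-s)/λ^s)·‖u₀‖_{Ḣ^s} for an absolute constant C. -/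
open Real


lemma key_upper (s N lam a : ℝ) (hs : 0 < s) (hs1 : s < 1) (hN : 1 ≤ N)
    (hlam : 1 ≤ lam) (ha : 0 ≤ a) :
    a / lam * (if a/lam ≤ N then (1:ℝ) else ((a/lam)/N)^(s-1))
      ≤ N^(1-s)/lam^s * a^s := by
  have hlam0 : (0:ℝ) < lam := lt_of_lt_of_le one_pos hlam
  have hN0 : (0:ℝ) < N := lt_of_lt_of_le one_pos hN
  set k : ℝ := a / lam with hk
  have hk0 : 0 ≤ k := by positivity
  have hks : k ^ s = a ^ s / lam ^ s := Real.div_rpow ha hlam0.le s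
  have goal' : k * (if k ≤ N then (1:ℝ) else (k/N)^(s-1)) ≤ N^(1-s) * k^s := by
    split_ifs with h
    · rcases eq_or_lt_of_le hk0 with h0 | h0
      · simp [← h0, Real.zero_rpow hs.ne']
      · have hsplit : k = k ^ s * k ^ (1-s) := by
          rw [← Real.rpow_add h0]; simp
        have h1 : k ^ (1-s) ≤ N ^ (1-s) :=
          Real.rpow_le_rpow hk0 h (by linarith)
        rw [mul_one]
        calc k = k ^ s * k ^ (1-s) := hsplit
          _ ≤ k ^ s * N ^ (1-s) :=
              mul_le_mul_of_nonneg_left h1 (Real.rpow_nonneg hk0 s)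
          _ = N^(1-s) * k^s := mul_comm _ _
    · push_neg at h
      have hk1 : 0 < k := lt_trans hN0 h
      have ea : k * k^(s-1) = k^s := by
        nth_rewrite 1 [← Real.rpow_one k]
        rw [← Real.rpow_add hk1]; norm_num
      have eb : N^(1-s) = (N^(s-1))⁻¹ := by
        rw [← Real.rpow_neg hN0.le]; ring_nf
      have : k * (k/N)^(s-1) = N^(1-s) * k^s := by
        rw [Real.div_rpow hk1.le hN0.le, eb, ← ea]; field_simp
      exact le_of_eq this
  calc a / lam * (if a/lam ≤ N then (1:ℝ) else ((a/lam)/N)^(s-1))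
      ≤ N^(1-s) * k^s := goal'
    _ = N^(1-s)/lam^s * a^s := by rw [hks]; ring

lemma key_lower (s N lam a : ℝ) (hs : 0 < s) (hs1 : s < 1) (hN : 1 ≤ N)
    (hlam : 1 ≤ lam) (ha : a = 0 ∨ 1 ≤ a) :
    a ^ s ≤ lam * (a / lam * (if a/lam ≤ N then (1:ℝ) else ((a/lam)/N)^(s-1))) := by
  have hlam0 : (0:ℝ) < lam := lt_of_lt_of_le one_pos hlam
  have hN0 : (0:ℝ) < N := lt_of_lt_of_le one_pos hN
  rcases ha with rfl | ha
  · simp [Real.zero_rpow hs.ne']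
  have ha0 : 0 < a := lt_of_lt_of_le one_pos ha
  split_ifs with h
  · rw [mul_one, mul_div_cancel₀ _ hlam0.ne']
    calc a ^ s ≤ a ^ (1:ℝ) := Real.rpow_le_rpow_of_exponent_le ha hs1.le
      _ = a := Real.rpow_one a
  · have hln : (1:ℝ) ≤ lam * N := one_le_mul_of_one_le_of_one_le hlam hN
    have ea : a * a^(s-1) = a^s := by
      nth_rewrite 1 [← Real.rpow_one a]
      rw [← Real.rpow_add ha0]; norm_num
    have eb : (lam*N)^(1-s) = ((lam*N)^(s-1))⁻¹ := by
      rw [← Real.rpow_neg (by positivity)]; ring_nf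
    have e : lam * (a / lam * ((a/lam)/N)^(s-1)) = a^s * (lam*N)^(1-s) := by
      rw [div_div, Real.div_rpow ha0.le (by positivity)]
      field_simp
      rw [ea, eb]
      field_simp
    rw [e]
    exact le_mul_of_one_le_right (Real.rpow_nonneg ha0.le s)
      (Real.one_le_rpow hln (by linarith))


theorem rescaled_I_energy_bound :
    ∃ C : ℝ, 0 < C ∧
      ∀ (s N lam : ℝ), 0 < s → s < 1 → 1 ≤ N → 1 ≤ lam →
      ∀ u₀ : AddCircle (1 : ℝ) → ℂ,
        Real.sqrt (∑' n : ℤ,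
            ((2 * π * |(n : ℝ)| / lam) *
              (if |(n : ℝ) / lam| ≤ N then (1:ℝ) else ((|(n : ℝ) / lam|) / N) ^ (s-1)))^2 *
            ‖@fourierCoeff 1 ⟨one_pos⟩ ℂ _ _ u₀ n‖^2)
          ≤ C * (N ^ (1-s) / lam ^ s) *
            Real.sqrt (∑' n : ℤ, |(n : ℝ)| ^ (2*s) * ‖@fourierCoeff 1 ⟨one_pos⟩ ℂ _ _ u₀ n‖^2) := by
  refine ⟨2 * π, by positivity, ?_⟩
  intro s N lam hs hs1 hN hlam u₀
  have hlam0 : (0:ℝ) < lam := lt_of_lt_of_le one_pos hlam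
  have hN0 : (0:ℝ) < N := lt_of_lt_of_le one_pos hN
  set f : ℤ → ℝ := fun n : ℤ =>
    ((2 * π * |(n : ℝ)| / lam) *
      (if |(n : ℝ) / lam| ≤ N then (1:ℝ) else ((|(n : ℝ) / lam|) / N) ^ (s-1)))^2 *
    ‖@fourierCoeff 1 ⟨one_pos⟩ ℂ _ _ u₀ n‖^2 with hfdef
  set g : ℤ → ℝ := fun n : ℤ =>
    |(n : ℝ)| ^ (2*s) * ‖@fourierCoeff 1 ⟨one_pos⟩ ℂ _ _ u₀ n‖^2 with hgdef
  have hf0 : ∀ n, 0 ≤ f n := by intro n; simp only [hfdef]; positivity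
  have hg0 : ∀ n, 0 ≤ g n := by intro n; simp only [hgdef]; positivity
  have habs : ∀ n : ℤ, |(n : ℝ)/lam| = |(n : ℝ)|/lam := by
    intro n; rw [abs_div, abs_of_pos hlam0]
  have haI : ∀ n : ℤ, |(n : ℝ)| = 0 ∨ 1 ≤ |(n : ℝ)| := by
    intro n
    rcases eq_or_ne n 0 with rfl | hn
    · left; simp
    · right
      have : (1:ℤ) ≤ |n| := Int.one_le_abs hn
      calc (1:ℝ) ≤ ((|n| : ℤ) : ℝ) := by exact_mod_cast this
        _ = |(n:ℝ)| := by push_cast; ring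
  have e2s : ∀ n : ℤ, |(n : ℝ)| ^ (2*s) = (|(n : ℝ)| ^ s)^2 := by
    intro n
    rw [show (2:ℝ)*s = s*2 by ring, Real.rpow_mul (abs_nonneg _), Real.rpow_two]
  have hX0 : ∀ n : ℤ, 0 ≤ |(n : ℝ)|/lam *
      (if |(n : ℝ)|/lam ≤ N then (1:ℝ) else ((|(n : ℝ)|/lam)/N)^(s-1)) := by
    intro n
    apply mul_nonneg (by positivity)
    split_ifs
    · norm_num
    · exact Real.rpow_nonneg (by positivity) _
  have hfg : ∀ n, f n ≤ (2*π*(N^(1-s)/lam^s))^2 * g n := by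
    intro n
    simp only [hfdef, hgdef, habs n]
    have h1 := key_upper s N lam |(n : ℝ)| hs hs1 hN hlam (abs_nonneg _)
    calc ((2 * π * |(n : ℝ)| / lam) *
          (if |(n : ℝ)|/lam ≤ N then (1:ℝ) else ((|(n : ℝ)|/lam)/N)^(s-1)))^2 *
          ‖@fourierCoeff 1 ⟨one_pos⟩ ℂ _ _ u₀ n‖^2
        = (2*π)^2 * (|(n : ℝ)|/lam *
            (if |(n : ℝ)|/lam ≤ N then (1:ℝ) else ((|(n : ℝ)|/lam)/N)^(s-1)))^2 *
          ‖@fourierCoeff 1 ⟨one_pos⟩ ℂ _ _ u₀ n‖^2 := by ring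
      _ ≤ (2*π)^2 * (N^(1-s)/lam^s * |(n : ℝ)|^s)^2 *
          ‖@fourierCoeff 1 ⟨one_pos⟩ ℂ _ _ u₀ n‖^2 := by
          have h2 := pow_le_pow_left₀ (hX0 n) h1 2
          exact mul_le_mul_of_nonneg_right
            (mul_le_mul_of_nonneg_left h2 (by positivity)) (by positivity)
      _ = (2*π*(N^(1-s)/lam^s))^2 *
          (|(n : ℝ)| ^ (2*s) * ‖@fourierCoeff 1 ⟨one_pos⟩ ℂ _ _ u₀ n‖^2) := by
          rw [e2s n]; ring
  have hgf : ∀ n, g n ≤ (lam/(2*π))^2 * f n := by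
    intro n
    simp only [hfdef, hgdef, habs n]
    have h1 := key_lower s N lam |(n : ℝ)| hs hs1 hN hlam (haI n)
    have h2 : (|(n : ℝ)|^s)^2 ≤ (lam * (|(n : ℝ)|/lam *
        (if |(n : ℝ)|/lam ≤ N then (1:ℝ) else ((|(n : ℝ)|/lam)/N)^(s-1))))^2 :=
      pow_le_pow_left₀ (Real.rpow_nonneg (abs_nonneg _) s) h1 2
    calc |(n : ℝ)| ^ (2*s) * ‖@fourierCoeff 1 ⟨one_pos⟩ ℂ _ _ u₀ n‖^2
        = (|(n : ℝ)|^s)^2 * ‖@fourierCoeff 1 ⟨one_pos⟩ ℂ _ _ u₀ n‖^2 := by rw [e2s n]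
      _ ≤ (lam * (|(n : ℝ)|/lam *
            (if |(n : ℝ)|/lam ≤ N then (1:ℝ) else ((|(n : ℝ)|/lam)/N)^(s-1))))^2 *
          ‖@fourierCoeff 1 ⟨one_pos⟩ ℂ _ _ u₀ n‖^2 := by
          exact mul_le_mul_of_nonneg_right h2 (by positivity)
      _ = (lam/(2*π))^2 * (((2 * π * |(n : ℝ)| / lam) *
            (if |(n : ℝ)|/lam ≤ N then (1:ℝ) else ((|(n : ℝ)|/lam)/N)^(s-1)))^2 *
          ‖@fourierCoeff 1 ⟨one_pos⟩ ℂ _ _ u₀ n‖^2) := by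
          field_simp
  by_cases hsum : Summable g
  · have hfs : Summable f :=
      Summable.of_nonneg_of_le hf0 hfg (hsum.mul_left _)
    have hts : ∑' n, f n ≤ (2*π*(N^(1-s)/lam^s))^2 * ∑' n, g n := by
      rw [← tsum_mul_left]
      exact Summable.tsum_le_tsum hfg hfs (hsum.mul_left _)
    have hs2 := Real.sqrt_le_sqrt hts
    rw [Real.sqrt_mul (by positivity), Real.sqrt_sq (by positivity)] at hs2
    calc Real.sqrt (∑' n, f n) ≤ 2*π*(N^(1-s)/lam^s) * Real.sqrt (∑' n, g n) := hs2
      _ = 2 * π * (N ^ (1-s) / lam ^ s) * Real.sqrt (∑' n, g n) := by ring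
  · have hfn : ¬ Summable f := by
      intro hf
      exact hsum (Summable.of_nonneg_of_le hg0 hgf (hf.mul_left _))
    rw [tsum_eq_zero_of_not_summable hfn, tsum_eq_zero_of_not_summable hsum]
    simp [Real.sqrt_zero]
end
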